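/- Let w be a segmented Smirnov word of length n with k ascents and l descents whose maximal letter is at most m and with no singleton block equal to m. The q-enumerator, with respect to sminv, over all words obtained from w by inserting s new singleton blocks each containing the letter m, equals [n−k−l+s choose s]_q · q^{sminv(w)}. -/

import Mathlib

/-- A word `w` together with a set `B` of block-start positions is a segmented
Smirnov word: block starts are valid positions, position `0` starts a block,
letters are positive, and two adjacent letters inside a common block differ. -/
def IsSSW (w : List ℕ) (B : Finset ℕ) : Prop :=
  (∀ b ∈ B, b < w.length) ∧ (w ≠ [] → 0 ∈ B) ∧ (∀ x ∈ w, 0 < x) ∧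
  (∀ i, i + 1 < w.length → (i + 1) ∉ B → w.getD i 0 ≠ w.getD (i + 1) 0)

def AscentAt (w : List ℕ) (B : Finset ℕ) (i : ℕ) : Prop :=
  i + 1 < w.length ∧ (i + 1) ∉ B ∧ w.getD i 0 < w.getD (i + 1) 0

def DescentAt (w : List ℕ) (B : Finset ℕ) (i : ℕ) : Prop :=
  i + 1 < w.length ∧ (i + 1) ∉ B ∧ w.getD (i + 1) 0 < w.getD i 0

noncomputable def numAsc (w : List ℕ) (B : Finset ℕ) : ℕ := Set.ncard {i | AscentAt w B i}

noncomputable def numDesc (w : List ℕ) (B : Finset ℕ) : ℕ := Set.ncard {i | DescentAt w B i}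

/-- `(i,j)` is a sminversion of the segmented word `(w, B)`. -/
def Sminversion (w : List ℕ) (B : Finset ℕ) (i j : ℕ) : Prop :=
  i < j ∧ j < w.length ∧ w.getD j 0 < w.getD i 0 ∧
    (j ∈ B ∨ w.getD i 0 < w.getD (j - 1) 0 ∨
     (i + 1 ≠ j ∧ w.getD (j - 1) 0 = w.getD i 0 ∧ (j - 1) ∈ B) ∨
     (i + 1 ≠ j ∧ 2 ≤ j ∧ w.getD (j - 1) 0 < w.getD (j - 2) 0 ∧
       w.getD (j - 1) 0 = w.getD i 0))

noncomputable def sminv (w : List ℕ) (B : Finset ℕ) : ℕ :=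
  Set.ncard {p : ℕ × ℕ | Sminversion w B p.1 p.2}

/-- The q-analogue `[m]_q = 1 + q + ⋯ + q^{m-1}` as a polynomial. -/
noncomputable def qInt (m : ℕ) : Polynomial ℕ := ∑ i ∈ Finset.range m, Polynomial.X ^ i

/-- The Gaussian binomial coefficient, via the q-Pascal recurrence. -/
noncomputable def qbinom : ℕ → ℕ → Polynomial ℕ
  | _, 0 => 1
  | 0, _ + 1 => 0
  | n + 1, k + 1 => qbinom n k + Polynomial.X ^ (k + 1) * qbinom n (k + 1)

/-- Insert `c i` copies of the letter `m` immediately before each (original)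
position `i`; the first argument is the index of the head of the list. -/
def multiInsertCnt (m : ℕ) (c : ℕ → ℕ) : ℕ → List ℕ → List ℕ
  | i, [] => List.replicate (c i) m
  | i, x :: xs => List.replicate (c i) m ++ x :: multiInsertCnt m c (i + 1) xs

/-- Total number of insertions strictly before position `p`. -/
def csum (c : ℕ → ℕ) (p : ℕ) : ℕ := ∑ q ∈ Finset.range p, c q

/-- The new block starts after inserting, for each gap `p`, `c p` singleton
blocks `{m}`: old starts are shifted, and every inserted letter is a start. -/
def singletonBreaks (c : ℕ → ℕ) (w : List ℕ) (B : Finset ℕ) : Finset ℕ :=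
  (B.image fun b => b + csum c (b + 1)) ∪
    (insert w.length B).biUnion fun p =>
      (Finset.range (c p)).image fun t => p + csum c p + t

/-!
Inserting copies of the largest letter `m` as singleton blocks creates no sminversion whose
second letter is an inserted one and does not change the sminversions among the old letters.
An `m` inserted in front of position `p` forms an sminversion with exactly one letter of each
block starting at or after `p`: the first letter of that block below `m`, which exists because
no block is the singleton `{m}`. So an insertion into a gap followed by `g` blocks adds `g`
sminversions. Every letter not starting a block is an ascent or a descent, so `w` has
`n - k - l` blocks; the `n - k - l + 1` gaps thus carry the weights `0, …, n - k - l`, and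
summing `q ^ (g₁ + ⋯ + gₛ)` over multisets of `s` weights gives `[n - k - l + s choose s]_q`.
-/

open Finset Polynomial

theorem qbinom_zero_right (n : ℕ) : qbinom n 0 = 1 := by cases n <;> rfl

theorem qbinom_succ_succ (n k : ℕ) :
    qbinom (n + 1) (k + 1) = qbinom n k + X ^ (k + 1) * qbinom n (k + 1) := rfl

theorem qbinom_eq_zero_of_lt {n k : ℕ} (h : n < k) : qbinom n k = 0 := by
  induction n generalizing k with
  | zero => obtain ⟨k, rfl⟩ := Nat.exists_eq_add_one.2 h; rfl
  | succ n ih =>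
    obtain ⟨k, rfl⟩ := Nat.exists_eq_add_one.2 (Nat.zero_lt_of_lt h)
    rw [qbinom_succ_succ, ih (by omega), ih (by omega), mul_zero, add_zero]

theorem qbinom_self (n : ℕ) : qbinom n n = 1 := by
  induction n with
  | zero => rfl
  | succ n ih =>
    rw [qbinom_succ_succ, ih, qbinom_eq_zero_of_lt n.lt_succ_self, mul_zero, add_zero]

-- With the truncated `n - k` this also holds for `n ≤ k`.
theorem qbinom_succ_succ' (n k : ℕ) :
    qbinom (n + 1) (k + 1) = qbinom n (k + 1) + X ^ (n - k) * qbinom n k := by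
  induction n generalizing k with
  | zero => cases k <;> simp [qbinom_succ_succ, qbinom_zero_right, qbinom_eq_zero_of_lt]
  | succ n ih =>
    cases k with
    | zero =>
      conv_lhs => rw [qbinom_succ_succ, ih 0]
      rw [qbinom_succ_succ n 0]
      simp only [qbinom_zero_right, Nat.sub_zero]
      ring
    | succ k =>
      conv_lhs => rw [qbinom_succ_succ (n + 1), ih k, ih (k + 1)]
      rw [qbinom_succ_succ n (k + 1), qbinom_succ_succ n k]
      rcases lt_or_ge k n with hkn | hnk
      · rw [show n - k = n - (k + 1) + 1 by omega, show n + 1 - (k + 1) = n - (k + 1) + 1 by omega]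
        ring
      · rw [qbinom_eq_zero_of_lt (show n < k + 1 by omega),
          qbinom_eq_zero_of_lt (show n < k + 1 + 1 by omega), Nat.sub_eq_zero_of_le hnk,
          Nat.sub_eq_zero_of_le (show n + 1 ≤ k + 1 by omega)]
        ring

theorem Finset.sum_sym_succ_insert {α M : Type*} [DecidableEq α] [AddCommMonoid M] {a : α}
    {T : Finset α} (ha : a ∉ T) (n : ℕ) (g : Sym α (n + 1) → M) :
    ∑ K ∈ (insert a T).sym (n + 1), g K =
      ∑ K ∈ (insert a T).sym n, g (a ::ₛ K) + ∑ K ∈ T.sym (n + 1), g K := by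
  have hwith :
      ((insert a T).sym (n + 1)).filter (a ∈ ·) = ((insert a T).sym n).image (a ::ₛ ·) := by
    ext K
    simp only [mem_filter, mem_sym_iff, mem_image]
    constructor
    · rintro ⟨hK, haK⟩
      refine ⟨K.erase a haK, fun b hb => hK b ?_, Sym.cons_erase haK⟩
      rw [← Sym.mem_coe, Sym.coe_erase] at hb
      exact Multiset.mem_of_mem_erase hb
    · rintro ⟨K, hK, rfl⟩
      exact ⟨fun b hb => (Sym.mem_cons.1 hb).elim (· ▸ mem_insert_self a T) (hK b),
        Sym.mem_cons_self a K⟩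
  have hwithout : ((insert a T).sym (n + 1)).filter (a ∉ ·) = T.sym (n + 1) := by
    ext K
    simp only [mem_filter, mem_sym_iff, mem_insert]
    exact ⟨fun ⟨hK, haK⟩ b hb => (hK b hb).resolve_left (fun h => haK (h ▸ hb)),
      fun hK => ⟨fun b hb => Or.inr (hK b hb), fun haK => ha (hK a haK)⟩⟩
  rw [← sum_filter_add_sum_filter_not _ (a ∈ ·), hwith, hwithout,
    sum_image fun _ _ _ _ h => (Sym.cons_inj_right a _ _).1 h]

theorem sum_sym_range_pow_sum (N s : ℕ) :
    ∑ K ∈ (range (N + 1)).sym s, (X : ℕ[X]) ^ (K : Multiset ℕ).sum = qbinom (N + s) s := by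
  induction N generalizing s with
  | zero => simp [qbinom_self, Sym.coe_replicate]
  | succ N ihN =>
    induction s with
    | zero => simp [qbinom_zero_right, show ((∅ : Sym ℕ 0) : Multiset ℕ) = 0 from rfl]
    | succ s ihs =>
      rw [range_add_one, sum_sym_succ_insert notMem_range_self]
      simp only [Sym.coe_cons, Multiset.sum_cons, pow_add, ← mul_sum]
      rw [← range_add_one, ihs, ihN, show N + 1 + (s + 1) = N + 1 + s + 1 by omega,
        qbinom_succ_succ', show N + 1 + s - s = N + 1 by omega,
        show N + (s + 1) = N + 1 + s by omega]
      ring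

theorem Finset.sum_sym_map_of_injOn {α β M : Type*} [DecidableEq α] [Nonempty α]
    [DecidableEq β] [AddCommMonoid M] {f : α → β} {S : Finset α} (hf : Set.InjOn f S)
    (n : ℕ) (g : Sym β n → M) :
    ∑ K ∈ S.sym n, g (K.map f) = ∑ K ∈ (S.image f).sym n, g K := by
  have hinv : ∀ b ∈ S.image f,
      Function.invFunOn f S b ∈ S ∧ f (Function.invFunOn f S b) = b := by
    intro b hb
    have hb' : ∃ a ∈ (S : Set α), f a = b := by simpa using hb
    exact ⟨Function.invFunOn_mem hb', Function.invFunOn_eq hb'⟩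
  refine sum_nbij' (Sym.map f) (Sym.map (Function.invFunOn f S)) ?_ ?_ ?_ ?_ fun _ _ => rfl
  · intro K hK
    simp only [mem_sym_iff, Sym.mem_map] at hK ⊢
    rintro _ ⟨a, ha, rfl⟩
    exact mem_image_of_mem f (hK a ha)
  · intro K hK
    simp only [mem_sym_iff, Sym.mem_map] at hK ⊢
    rintro _ ⟨b, hb, rfl⟩
    exact (hinv b (hK b hb)).1
  · intro K hK
    rw [mem_sym_iff] at hK
    rw [Sym.map_map, ← Sym.map_id K, Sym.map_map]
    exact Sym.map_congr fun a ha => hf.leftInvOn_invFunOn (hK a ha)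
  · intro K hK
    rw [mem_sym_iff] at hK
    rw [Sym.map_map, ← Sym.map_id K, Sym.map_map]
    exact Sym.map_congr fun b hb => (hinv b (hK b hb)).2

theorem Finset.sum_multiset_map_count_of_subset {α M : Type*} [DecidableEq α] [AddCommMonoid M]
    (m : Multiset α) {s : Finset α} (hs : ∀ a ∈ m, a ∈ s) (f : α → M) :
    (m.map f).sum = ∑ a ∈ s, m.count a • f a := by
  rw [sum_multiset_map_count]
  exact sum_subset (fun a ha => hs a (Multiset.mem_toFinset.1 ha)) fun a _ ha => by
    rw [Multiset.count_eq_zero.2 (mt Multiset.mem_toFinset.2 ha), zero_smul]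

def blocksFrom (B : Finset ℕ) (p : ℕ) : ℕ := #{b ∈ B | p ≤ b}

theorem blocksFrom_le_card (B : Finset ℕ) (p : ℕ) : blocksFrom B p ≤ #B :=
  card_filter_le B _

theorem strictAntiOn_blocksFrom {B : Finset ℕ} {n : ℕ} (hB : ∀ b ∈ B, b < n) :
    StrictAntiOn (blocksFrom B) (insert n B : Finset ℕ) := by
  intro p hp q hq hpq
  have hpB : p ∈ B := by
    rcases mem_insert.1 hp with rfl | hpB
    · rcases mem_insert.1 hq with rfl | hqB
      · omega
      · exact absurd (hB q hqB) (by omega)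
    · exact hpB
  refine card_lt_card ⟨monotone_filter_right B fun b _ hqb => hpq.le.trans hqb, fun hsub => ?_⟩
  have := (mem_filter.1 (hsub (mem_filter.2 ⟨hpB, le_rfl⟩))).2
  omega

theorem image_blocksFrom_insert {B : Finset ℕ} {n : ℕ} (hB : ∀ b ∈ B, b < n) :
    (insert n B).image (blocksFrom B) = range (#B + 1) := by
  refine eq_of_subset_of_card_le (fun v hv => ?_) ?_
  · obtain ⟨p, -, rfl⟩ := mem_image.1 hv
    exact mem_range.2 (Nat.lt_succ_of_le (blocksFrom_le_card B p))
  · rw [card_range, card_image_of_injOn (strictAntiOn_blocksFrom hB).injOn,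
      card_insert_of_notMem fun h => (hB n h).false]

theorem csum_succ (c : ℕ → ℕ) (p : ℕ) : csum c (p + 1) = csum c p + c p :=
  sum_range_succ c p

theorem csum_mono (c : ℕ → ℕ) : Monotone (csum c) := fun _ _ h =>
  sum_le_sum_of_subset (range_subset_range.2 h)

theorem csum_succ' (c : ℕ → ℕ) (p : ℕ) :
    csum c (p + 1) = c 0 + csum (fun q => c (q + 1)) p := by
  rw [csum, sum_range_succ', add_comm, csum]

/-- In `multiInsertCnt m c 0 w`, the letter of `w` at position `i` moves to `shiftedPos c i`,
and the `t`-th copy of `m` inserted before position `p` sits at `insertedPos c p t`. -/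
def shiftedPos (c : ℕ → ℕ) (i : ℕ) : ℕ := i + csum c (i + 1)

def insertedPos (c : ℕ → ℕ) (p t : ℕ) : ℕ := p + csum c p + t

section Positions

variable (c : ℕ → ℕ)

theorem shiftedPos_zero : shiftedPos c 0 = c 0 := by
  simp [shiftedPos, csum]

theorem shiftedPos_succ (i : ℕ) :
    shiftedPos c (i + 1) = c 0 + 1 + shiftedPos (fun q => c (q + 1)) i := by
  simp only [shiftedPos, csum_succ' c (i + 1)]
  omega

theorem insertedPos_zero (t : ℕ) : insertedPos c 0 t = t := by
  simp [insertedPos, csum]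

theorem insertedPos_succ (p t : ℕ) :
    insertedPos c (p + 1) t = c 0 + 1 + insertedPos (fun q => c (q + 1)) p t := by
  simp only [insertedPos, csum_succ' c p]
  omega

theorem shiftedPos_strictMono : StrictMono (shiftedPos c) :=
  strictMono_nat_of_lt_succ fun i => by
    have := csum_mono c (show i + 1 ≤ i + 1 + 1 by omega)
    unfold shiftedPos
    omega

theorem le_shiftedPos (i : ℕ) : i ≤ shiftedPos c i := Nat.le_add_right _ _

theorem shiftedPos_sub_one {j : ℕ} (hj : 0 < j) (hcj : c j = 0) :
    shiftedPos c j - 1 = shiftedPos c (j - 1) := by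
  obtain ⟨i, rfl⟩ := Nat.exists_eq_add_one.2 hj
  simp only [shiftedPos, csum_succ c (i + 1), hcj, add_zero, Nat.add_sub_cancel]
  omega

variable {c}

theorem shiftedPos_lt_insertedPos {i p : ℕ} (t : ℕ) (hip : i < p) :
    shiftedPos c i < insertedPos c p t := by
  have := csum_mono c (show i + 1 ≤ p from hip)
  unfold shiftedPos insertedPos
  omega

theorem insertedPos_lt_shiftedPos_iff {p t j : ℕ} (ht : t < c p) :
    insertedPos c p t < shiftedPos c j ↔ p ≤ j := by
  refine ⟨fun h => not_lt.1 fun hjp => (shiftedPos_lt_insertedPos t hjp).not_gt h,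
    fun hpj => ?_⟩
  have := csum_mono c (show p + 1 ≤ j + 1 by omega)
  rw [csum_succ] at this
  unfold insertedPos shiftedPos
  omega

theorem shiftedPos_ne_insertedPos {i p t : ℕ} (ht : t < c p) :
    shiftedPos c i ≠ insertedPos c p t := by
  rcases lt_or_ge i p with h | h
  · exact (shiftedPos_lt_insertedPos t h).ne
  · exact ((insertedPos_lt_shiftedPos_iff ht).2 h).ne'

theorem insertedPos_inj {p t p' t' : ℕ} (ht : t < c p) (ht' : t' < c p')
    (h : insertedPos c p t = insertedPos c p' t') : p = p' ∧ t = t' := by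
  have hp : p = p' := by
    by_contra hne
    rcases lt_or_gt_of_ne hne with hlt | hlt
    · have := (insertedPos_lt_shiftedPos_iff ht).2 le_rfl
      have := shiftedPos_lt_insertedPos (c := c) t' hlt
      omega
    · have := (insertedPos_lt_shiftedPos_iff ht').2 le_rfl
      have := shiftedPos_lt_insertedPos (c := c) t hlt
      omega
  subst hp
  exact ⟨rfl, by unfold insertedPos at h; omega⟩

end Positions

theorem List.getD_le_of_forall_le {xs : List ℕ} {m : ℕ} (h : ∀ x ∈ xs, x ≤ m) (i : ℕ) :
    xs.getD i 0 ≤ m := by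
  rcases lt_or_ge i xs.length with hi | hi
  · rw [List.getD_eq_getElem _ _ hi]
    exact h _ (List.getElem_mem hi)
  · rw [List.getD_eq_default _ _ hi]
    exact Nat.zero_le m

section MultiInsert

variable (m : ℕ)

theorem multiInsertCnt_succ (xs : List ℕ) (c : ℕ → ℕ) (i : ℕ) :
    multiInsertCnt m c (i + 1) xs = multiInsertCnt m (fun q => c (q + 1)) i xs := by
  induction xs generalizing i with
  | nil => rfl
  | cons x xs ih => simp only [multiInsertCnt, ih]

theorem multiInsertCnt_cons (c : ℕ → ℕ) (x : ℕ) (xs : List ℕ) :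
    multiInsertCnt m c 0 (x :: xs) =
      List.replicate (c 0) m ++ x :: multiInsertCnt m (fun q => c (q + 1)) 0 xs := by
  rw [multiInsertCnt, multiInsertCnt_succ]

theorem length_multiInsertCnt (xs : List ℕ) (c : ℕ → ℕ) :
    (multiInsertCnt m c 0 xs).length = shiftedPos c xs.length := by
  induction xs generalizing c with
  | nil => simp [multiInsertCnt, shiftedPos_zero]
  | cons x xs ih =>
    rw [multiInsertCnt_cons, List.length_cons, shiftedPos_succ]
    simp only [List.length_append, List.length_replicate, List.length_cons, ih]
    omega

theorem getD_multiInsertCnt_shiftedPos (xs : List ℕ) (c : ℕ → ℕ) (i : ℕ) :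
    (multiInsertCnt m c 0 xs).getD (shiftedPos c i) 0 = xs.getD i 0 := by
  rcases lt_or_ge i xs.length with hi | hi
  · induction xs generalizing c i with
    | nil => simp at hi
    | cons x xs ih =>
      rw [multiInsertCnt_cons]
      cases i with
      | zero => simp [shiftedPos_zero]
      | succ i =>
        rw [shiftedPos_succ, List.getD_append_right _ _ _ _ (by simp; omega),
          List.length_replicate, show c 0 + 1 + shiftedPos (fun q => c (q + 1)) i - c 0 =
            shiftedPos (fun q => c (q + 1)) i + 1 by omega, List.getD_cons_succ,
          List.getD_cons_succ]
        exact ih _ _ (by simpa using hi)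
  · have hW : (multiInsertCnt m c 0 xs).length ≤ shiftedPos c i :=
      length_multiInsertCnt m xs c ▸ (shiftedPos_strictMono c).monotone hi
    rw [List.getD_eq_default _ _ hi, List.getD_eq_default _ _ hW]

theorem getD_multiInsertCnt_insertedPos (xs : List ℕ) (c : ℕ → ℕ) {p t : ℕ}
    (hp : p ≤ xs.length) (ht : t < c p) :
    (multiInsertCnt m c 0 xs).getD (insertedPos c p t) 0 = m := by
  induction xs generalizing c p with
  | nil =>
    obtain rfl := Nat.le_zero.1 hp
    simp [multiInsertCnt, insertedPos_zero, ht]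
  | cons x xs ih =>
    rw [multiInsertCnt_cons]
    cases p with
    | zero =>
      rw [insertedPos_zero, List.getD_append _ _ _ _ (by simpa using ht)]
      simp [ht]
    | succ p =>
      rw [insertedPos_succ, List.getD_append_right _ _ _ _ (by simp; omega),
        List.length_replicate, show c 0 + 1 + insertedPos (fun q => c (q + 1)) p t - c 0 =
          insertedPos (fun q => c (q + 1)) p t + 1 by omega, List.getD_cons_succ]
      exact ih _ (by simpa using hp) ht

theorem le_of_mem_multiInsertCnt {xs : List ℕ} (hxs : ∀ x ∈ xs, x ≤ m) (c : ℕ → ℕ)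
    (i : ℕ) : ∀ x ∈ multiInsertCnt m c i xs, x ≤ m := by
  induction xs generalizing i with
  | nil => simp [multiInsertCnt]
  | cons y xs ih =>
    simp only [List.mem_cons, forall_eq_or_imp] at hxs
    simp only [multiInsertCnt, List.mem_append, List.mem_replicate, List.mem_cons]
    rintro x (⟨-, rfl⟩ | rfl | hx)
    exacts [le_rfl, hxs.1, ih hxs.2 _ x hx]

theorem exists_eq_shiftedPos_or_insertedPos (xs : List ℕ) (c : ℕ → ℕ) {a : ℕ}
    (ha : a < (multiInsertCnt m c 0 xs).length) :
    (∃ i < xs.length, a = shiftedPos c i) ∨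
      ∃ p t, p ≤ xs.length ∧ t < c p ∧ a = insertedPos c p t := by
  rw [length_multiInsertCnt] at ha
  induction xs generalizing c a with
  | nil =>
    rw [List.length_nil, shiftedPos_zero] at ha
    exact Or.inr ⟨0, a, le_rfl, ha, (insertedPos_zero c a).symm⟩
  | cons x xs ih =>
    rw [List.length_cons, shiftedPos_succ] at ha
    rcases lt_trichotomy a (c 0) with ha0 | rfl | ha0
    · exact Or.inr ⟨0, a, Nat.zero_le _, ha0, (insertedPos_zero c a).symm⟩
    · exact Or.inl ⟨0, by simp, (shiftedPos_zero c).symm⟩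
    · rcases ih (fun q => c (q + 1)) (a := a - (c 0 + 1)) (by omega) with
        ⟨i, hi, hai⟩ | ⟨p, t, hp, ht, hat⟩
      · exact Or.inl ⟨i + 1, by simpa using hi, by rw [shiftedPos_succ]; omega⟩
      · exact Or.inr ⟨p + 1, t, by simpa using hp, ht, by rw [insertedPos_succ]; omega⟩

end MultiInsert

theorem sminversion_congr {w w' : List ℕ} {B B' : Finset ℕ} {i j i' j' : ℕ}
    (hpos : i < j ∧ j < w.length ↔ i' < j' ∧ j' < w'.length)
    (hi : w.getD i 0 = w'.getD i' 0) (hj : w.getD j 0 = w'.getD j' 0)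
    (hjB : j ∈ B ↔ j' ∈ B')
    (hprev : j ∉ B → w.getD (j - 1) 0 = w'.getD (j' - 1) 0 ∧ (i + 1 = j ↔ i' + 1 = j') ∧
      (j - 1 ∈ B ↔ j' - 1 ∈ B') ∧
      (j - 1 ∉ B → (2 ≤ j ↔ 2 ≤ j') ∧ w.getD (j - 2) 0 = w'.getD (j' - 2) 0)) :
    Sminversion w B i j ↔ Sminversion w' B' i' j' := by
  -- when `j - 1 ∈ B`, the last clause of `Sminversion` implies the third one
  unfold Sminversion
  by_cases hjB0 : j ∈ B
  · have := hjB.1 hjB0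
    grind
  · obtain ⟨h1, h2, h3, h4⟩ := hprev hjB0
    by_cases hj1 : j - 1 ∈ B
    · have := h3.1 hj1
      grind
    · have := h4 hj1
      grind

instance (w : List ℕ) (B : Finset ℕ) (i j : ℕ) : Decidable (Sminversion w B i j) := by
  unfold Sminversion; infer_instance

def sminversions (w : List ℕ) (B : Finset ℕ) : Finset (ℕ × ℕ) :=
  {q ∈ range w.length ×ˢ range w.length | Sminversion w B q.1 q.2}

theorem sminv_eq_card_sminversions (w : List ℕ) (B : Finset ℕ) :
    sminv w B = #(sminversions w B) := by
  rw [sminv, sminversions, ← Set.ncard_coe_finset, coe_filter]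
  congr 1
  ext ⟨i, j⟩
  simp only [mem_product, mem_range, Set.mem_ofPred_eq]
  exact ⟨fun hS => ⟨⟨hS.1.trans hS.2.1, hS.2.1⟩, hS⟩, And.right⟩

section Insertion

variable {w : List ℕ} {B : Finset ℕ} {m : ℕ} {c : ℕ → ℕ}

theorem shiftedPos_mem_singletonBreaks_iff (j : ℕ) :
    shiftedPos c j ∈ singletonBreaks c w B ↔ j ∈ B := by
  simp only [singletonBreaks, mem_union, mem_image, mem_biUnion, mem_range]
  constructor
  · rintro (⟨b, hb, he⟩ | ⟨p, -, t, ht, he⟩)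
    · rwa [← (shiftedPos_strictMono c).injective he]
    · exact absurd he.symm (shiftedPos_ne_insertedPos ht)
  · exact fun hj => Or.inl ⟨j, hj, rfl⟩

theorem shiftedPos_sub_one_of_notMem (h0 : 0 ∈ B)
    (hc : ∀ p, c p ≠ 0 → p ∈ insert w.length B) {j : ℕ} (hj : j < w.length)
    (hjB : j ∉ B) :
    0 < j ∧ shiftedPos c j - 1 = shiftedPos c (j - 1) := by
  have hj0 : 0 < j := Nat.pos_of_ne_zero fun h => hjB (h ▸ h0)
  have hcj : c j = 0 := by
    by_contra hcj
    rcases mem_insert.1 (hc j hcj) with rfl | hjB'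
    exacts [lt_irrefl _ hj, hjB hjB']
  exact ⟨hj0, shiftedPos_sub_one c hj0 hcj⟩

theorem sminversion_shiftedPos_iff (h0 : 0 ∈ B)
    (hc : ∀ p, c p ≠ 0 → p ∈ insert w.length B) {i j : ℕ} (hj : j < w.length) :
    Sminversion (multiInsertCnt m c 0 w) (singletonBreaks c w B) (shiftedPos c i)
      (shiftedPos c j) ↔ Sminversion w B i j := by
  have hmono := shiftedPos_strictMono c
  refine (sminversion_congr ?_ (getD_multiInsertCnt_shiftedPos m w c i).symm
    (getD_multiInsertCnt_shiftedPos m w c j).symm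
    (shiftedPos_mem_singletonBreaks_iff j).symm fun hjB => ?_).symm
  · rw [length_multiInsertCnt, hmono.lt_iff_lt, hmono.lt_iff_lt]
  obtain ⟨hj0, hpred⟩ := shiftedPos_sub_one_of_notMem h0 hc hj hjB
  refine ⟨by rw [hpred, getD_multiInsertCnt_shiftedPos], ?_, ?_, fun hj1B => ?_⟩
  · have := le_shiftedPos c j
    rw [show shiftedPos c i + 1 = shiftedPos c j ↔ shiftedPos c i = shiftedPos c (j - 1) by
      omega, hmono.injective.eq_iff]
    omega
  · rw [hpred, shiftedPos_mem_singletonBreaks_iff]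
  · obtain ⟨hj1, hpred'⟩ := shiftedPos_sub_one_of_notMem h0 hc (by omega) hj1B
    simp only [Nat.sub_sub, Nat.reduceAdd] at hpred'
    have := le_shiftedPos c j
    rw [show shiftedPos c j - 2 = shiftedPos c (j - 2) by omega, getD_multiInsertCnt_shiftedPos]
    omega

theorem not_sminversion_insertedPos (hm : ∀ x ∈ w, x ≤ m) {p t : ℕ} (hp : p ≤ w.length)
    (ht : t < c p) (B' : Finset ℕ) (a : ℕ) :
    ¬ Sminversion (multiInsertCnt m c 0 w) B' a (insertedPos c p t) := fun hS => by
  have := (multiInsertCnt m c 0 w).getD_le_of_forall_le (le_of_mem_multiInsertCnt m hm c 0) a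
  have := hS.2.2.1
  rw [getD_multiInsertCnt_insertedPos m w c hp ht] at this
  omega

/-- Given letters `≤ m` and no singleton block `{m}`, this picks out in every block its first
letter below `m`: the first letter of the block, or the second one if the first is `m`. -/
def IsFirstBelowInBlock (w : List ℕ) (B : Finset ℕ) (m j : ℕ) : Prop :=
  w.getD j 0 < m ∧ (j ∈ B ∨ (j - 1 ∈ B ∧ w.getD (j - 1) 0 = m))

instance (w : List ℕ) (B : Finset ℕ) (m j : ℕ) : Decidable (IsFirstBelowInBlock w B m j) := by
  unfold IsFirstBelowInBlock; infer_instance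

theorem sminversion_insertedPos_shiftedPos_iff (h0 : 0 ∈ B)
    (hc : ∀ p, c p ≠ 0 → p ∈ insert w.length B) (hm : ∀ x ∈ w, x ≤ m) {p t j : ℕ}
    (hp : p ≤ w.length) (ht : t < c p) (hj : j < w.length) :
    Sminversion (multiInsertCnt m c 0 w) (singletonBreaks c w B) (insertedPos c p t)
        (shiftedPos c j) ↔ p ≤ j ∧ IsFirstBelowInBlock w B m j := by
  have hWle := (multiInsertCnt m c 0 w).getD_le_of_forall_le (le_of_mem_multiInsertCnt m hm c 0)
  unfold Sminversion IsFirstBelowInBlock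
  rw [getD_multiInsertCnt_insertedPos m w c hp ht, getD_multiInsertCnt_shiftedPos,
    insertedPos_lt_shiftedPos_iff ht, shiftedPos_mem_singletonBreaks_iff, length_multiInsertCnt,
    (shiftedPos_strictMono c).lt_iff_lt]
  by_cases hjB : j ∈ B
  · simp [hjB, hj]
  obtain ⟨hj0, hpred⟩ := shiftedPos_sub_one_of_notMem h0 hc hj hjB
  have hne : insertedPos c p t + 1 ≠ shiftedPos c j := fun he =>
    shiftedPos_ne_insertedPos ht (by omega : shiftedPos c (j - 1) = insertedPos c p t)
  have := w.getD_le_of_forall_le hm (j - 1)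
  have := hWle (shiftedPos c j - 2)
  rw [hpred, getD_multiInsertCnt_shiftedPos, shiftedPos_mem_singletonBreaks_iff]
  grind

theorem card_filter_isFirstBelowInBlock (h : IsSSW w B) (hm : ∀ x ∈ w, x ≤ m)
    (hno : ∀ b ∈ B, (b + 1 ∈ B ∨ b + 1 = w.length) → w.getD b 0 ≠ m) {p : ℕ}
    (hp : p ∈ insert w.length B) :
    #{j ∈ range w.length | p ≤ j ∧ IsFirstBelowInBlock w B m j} = blocksFrom B p := by
  obtain ⟨hB, -, -, hsm⟩ := h
  have hp' : p = w.length ∨ p ∈ B := mem_insert.1 hp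
  unfold blocksFrom
  -- the block starting at `b` is matched with `b`, or with `b + 1` if `w[b] = m`
  refine card_nbij' (fun j => if j ∈ B then j else j - 1)
    (fun b => if w.getD b 0 = m then b + 1 else b) ?_ ?_ ?_ ?_
  · intro j hj
    simp only [mem_coe, mem_filter, IsFirstBelowInBlock] at hj ⊢
    grind
  · intro b hb
    simp only [mem_coe, mem_filter, IsFirstBelowInBlock] at hb ⊢
    have := hB b hb.1
    have := hno b hb.1
    have := hsm b
    have := w.getD_le_of_forall_le hm b
    have := w.getD_le_of_forall_le hm (b + 1)
    grind
  · intro j hj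
    simp only [mem_coe, IsFirstBelowInBlock] at hj
    grind
  · intro b hb
    simp only [mem_coe, mem_filter] at hb
    have := hno b hb.1
    grind

theorem sminversions_multiInsertCnt (h0 : w ≠ [] → 0 ∈ B)
    (hc : ∀ p, c p ≠ 0 → p ∈ insert w.length B) (hm : ∀ x ∈ w, x ≤ m) :
    sminversions (multiInsertCnt m c 0 w) (singletonBreaks c w B) =
      (sminversions w B).image (Prod.map (shiftedPos c) (shiftedPos c)) ∪
        ((insert w.length B).sigma fun p =>
            range (c p) ×ˢ {j ∈ range w.length | p ≤ j ∧ IsFirstBelowInBlock w B m j}).image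
          fun x => (insertedPos c x.1 x.2.1, shiftedPos c x.2.2) := by
  ext ⟨a, b⟩
  simp only [sminversions, mem_union, mem_filter, mem_product, mem_range, mem_image, mem_sigma,
    Prod.exists, Sigma.exists, Prod.map, Prod.mk.injEq]
  have hlen := length_multiInsertCnt m w c
  have hmono := shiftedPos_strictMono c
  have h0' : ∀ {j}, j < w.length → 0 ∈ B := fun hj =>
    h0 (List.ne_nil_of_length_pos (by omega))
  constructor
  · rintro ⟨⟨ha, hb⟩, hS⟩
    obtain ⟨j, hj, rfl⟩ | ⟨p, t, hp, ht, rfl⟩ :=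
      exists_eq_shiftedPos_or_insertedPos m w c hb
    swap
    · exact absurd hS (not_sminversion_insertedPos hm hp ht _ a)
    obtain ⟨i, hi, rfl⟩ | ⟨p, t, hp, ht, rfl⟩ :=
      exists_eq_shiftedPos_or_insertedPos m w c ha
    · exact Or.inl
        ⟨i, j, ⟨⟨hi, hj⟩, (sminversion_shiftedPos_iff (h0' hj) hc hj).1 hS⟩, rfl, rfl⟩
    · exact Or.inr ⟨p, t, j, ⟨hc p (by omega), ht, hj,
        (sminversion_insertedPos_shiftedPos_iff (h0' hj) hc hm hp ht hj).1 hS⟩, rfl, rfl⟩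
  · rintro (⟨i, j, ⟨⟨hi, hj⟩, hS⟩, rfl, rfl⟩ |
      ⟨p, t, j, ⟨-, ht, hj, hpj⟩, rfl, rfl⟩)
    · exact ⟨⟨hlen ▸ hmono hi, hlen ▸ hmono hj⟩,
        (sminversion_shiftedPos_iff (h0' hj) hc hj).2 hS⟩
    · have hS := (sminversion_insertedPos_shiftedPos_iff (h0' hj) hc hm (hpj.1.trans hj.le) ht
        hj).2 hpj
      exact ⟨⟨hS.1.trans (hlen ▸ hmono hj), hlen ▸ hmono hj⟩, hS⟩

theorem sminv_multiInsertCnt (h : IsSSW w B) (hm : ∀ x ∈ w, x ≤ m)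
    (hno : ∀ b ∈ B, (b + 1 ∈ B ∨ b + 1 = w.length) → w.getD b 0 ≠ m)
    (hc : ∀ p, c p ≠ 0 → p ∈ insert w.length B) :
    sminv (multiInsertCnt m c 0 w) (singletonBreaks c w B) =
      sminv w B + ∑ p ∈ insert w.length B, c p * blocksFrom B p := by
  have hmono := shiftedPos_strictMono c
  rw [sminv_eq_card_sminversions, sminversions_multiInsertCnt h.2.1 hc hm,
    card_union_of_disjoint,
    card_image_of_injective _ (hmono.injective.prodMap hmono.injective),
    card_image_of_injOn, card_sigma, sminv_eq_card_sminversions]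
  · congr 1
    refine sum_congr rfl fun p hp => ?_
    rw [card_product, card_range, card_filter_isFirstBelowInBlock h hm hno hp]
  · rintro ⟨p, t, j⟩ hx ⟨p', t', j'⟩ hx' he
    simp only [coe_sigma, Set.mem_sigma_iff, coe_product, Set.mem_prod, coe_range,
      Set.mem_Iio] at hx hx'
    simp only [Prod.mk.injEq] at he
    obtain ⟨rfl, rfl⟩ := insertedPos_inj hx.2.1 hx'.2.1 he.1
    rw [hmono.injective he.2]
  · rw [disjoint_left]
    rintro _ hq1 hq2
    obtain ⟨⟨i, j⟩, -, rfl⟩ := mem_image.1 hq1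
    obtain ⟨⟨p, t, j'⟩, hx, he⟩ := mem_image.1 hq2
    simp only [mem_sigma, mem_product, mem_range] at hx
    exact shiftedPos_ne_insertedPos hx.2.1 (congrArg Prod.fst he).symm

end Insertion

theorem numAsc_add_numDesc_add_card {w : List ℕ} {B : Finset ℕ} (h : IsSSW w B) :
    numAsc w B + numDesc w B + #B = w.length := by
  obtain ⟨hB, h0, -, hsm⟩ := h
  have hunion : {i | AscentAt w B i} ∪ {i | DescentAt w B i} =
      {i | i + 1 < w.length ∧ i + 1 ∉ B} := by
    ext i
    have := hsm i
    simp only [Set.mem_union, Set.mem_ofPred_eq, AscentAt, DescentAt]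
    grind
  have hdisj : Disjoint {i | AscentAt w B i} {i | DescentAt w B i} :=
    Set.disjoint_left.2 fun i h1 h2 => by
      simp only [Set.mem_ofPred_eq, AscentAt, DescentAt] at h1 h2
      omega
  have hfin : ∀ P : ℕ → Prop, (∀ i, P i → i + 1 < w.length) → {i | P i}.Finite :=
    fun P hP => (Set.finite_Iio w.length).subset fun i hi =>
      Set.mem_Iio.2 (by have := hP i hi; omega)
  have hshift : Nat.succ '' {i | i + 1 < w.length ∧ i + 1 ∉ B} = ↑(range w.length \ B) := by
    ext j
    cases j with
    | zero => simpa using fun hw => h0 (List.ne_nil_of_length_pos hw)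
    | succ j => simp
  have hsub : B ⊆ range w.length := fun b hb => mem_range.2 (hB b hb)
  have hBle : #B ≤ w.length := card_range w.length ▸ card_le_card hsub
  rw [numAsc, numDesc, ← Set.ncard_union_eq hdisj (hfin _ fun i hi => hi.1)
    (hfin _ fun i hi => hi.1), hunion, ← Set.ncard_image_of_injective _ Nat.succ_injective,
    hshift, Set.ncard_coe_finset, card_sdiff_of_subset hsub, card_range]
  omega

/-- Singleton insertion: for a segmented Smirnov word `w` of length `n` with
`k` ascents, `l` descents, all letters `≤ m`, and no singleton block `m`, the
q-enumerator (w.r.t. `sminv`) of the words obtained by inserting `s` new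
singleton blocks containing `m` into the gaps between blocks (repetitions
allowed) is `[n-k-l+s choose s]_q · q^{sminv w}`. -/
theorem stmt7 (w : List ℕ) (B : Finset ℕ) (m k l s : ℕ) (h : IsSSW w B)
    (hm : ∀ x ∈ w, x ≤ m)
    (hno : ∀ b ∈ B, (b + 1 ∈ B ∨ b + 1 = w.length) → w.getD b 0 ≠ m)
    (hk : numAsc w B = k) (hl : numDesc w B = l) :
    ∑ M ∈ (insert w.length B).sym s,
      Polynomial.X ^ sminv
        (multiInsertCnt m (fun p => Multiset.count p (M : Multiset ℕ)) 0 w)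
        (singletonBreaks (fun p => Multiset.count p (M : Multiset ℕ)) w B) =
    qbinom (w.length - k - l + s) s * Polynomial.X ^ sminv w B := by
  have hB : ∀ b ∈ B, b < w.length := h.1
  have hsminv : ∀ M ∈ (insert w.length B).sym s,
      sminv (multiInsertCnt m (fun p => Multiset.count p (M : Multiset ℕ)) 0 w)
        (singletonBreaks (fun p => Multiset.count p (M : Multiset ℕ)) w B) =
      sminv w B + ((M : Multiset ℕ).map (blocksFrom B)).sum := fun M hM => by
    have hMS : ∀ p ∈ (M : Multiset ℕ), p ∈ insert w.length B := mem_sym_iff.1 hM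
    rw [sminv_multiInsertCnt h hm hno fun p hp => hMS p (Multiset.count_ne_zero.1 hp),
      sum_multiset_map_count_of_subset _ hMS]
    simp only [smul_eq_mul]
  have hreindex := sum_sym_map_of_injOn (strictAntiOn_blocksFrom hB).injOn s
    fun K => (X : ℕ[X]) ^ (K : Multiset ℕ).sum
  simp only [Sym.coe_map] at hreindex
  rw [sum_congr rfl fun M hM => by rw [hsminv M hM, pow_add, mul_comm], ← sum_mul, hreindex,
    image_blocksFrom_insert hB, sum_sym_range_pow_sum, ← numAsc_add_numDesc_add_card h, hk, hl,
    show k + l + #B - k - l = #B by omega]
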